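/- arXiv:1407.3519 — 2 statements merged into one kernel-verified Lean document; each statement's English description precedes it below -/
import Mathlib

section
/- Sequential open invariant for the toy protocol: the open automaton optoy i satisfies optoy i ⊨ (otherwith nos_increase {i} (orecvmsg msg_num_ok), other nos_increase {i} →) (λ(σ, p). no (σ i) ≤ no (σ (nhip (σ i)))); that is, assuming the no-fields of all other nodes never decrease and every received pkt message m satisfies msg_num_ok σ m, the no value at node i never exceeds the no value at the node named by its nhip field. -/
namespace AWN

/-- AWN sequential process terms. -/
inductive Seqp (S PN L IP MSG DATA : Type) : Type where
  | assign  (l : L) (u : S → S) (p : Seqp S PN L IP MSG DATA)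
  | guard   (l : L) (g : S → Set S) (p : Seqp S PN L IP MSG DATA)
  | ucast   (l : L) (fip : S → IP) (fmsg : S → MSG) (p q : Seqp S PN L IP MSG DATA)
  | bcast   (l : L) (fmsg : S → MSG) (p : Seqp S PN L IP MSG DATA)
  | gcast   (l : L) (fips : S → Set IP) (fmsg : S → MSG) (p : Seqp S PN L IP MSG DATA)
  | send    (l : L) (fmsg : S → MSG) (p : Seqp S PN L IP MSG DATA)
  | deliver (l : L) (fdata : S → DATA) (p : Seqp S PN L IP MSG DATA)
  | receive (l : L) (u : MSG → S → S) (p : Seqp S PN L IP MSG DATA)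
  | choice  (p q : Seqp S PN L IP MSG DATA)
  | call    (pn : PN)

variable {S PN L IP MSG DATA : Type}

def Seqp.isChoice : Seqp S PN L IP MSG DATA → Prop
  | .choice _ _ => True
  | _ => False

def Seqp.isCall : Seqp S PN L IP MSG DATA → Prop
  | .call _ => True
  | _ => False

/-- The microstep relation `p ↝Γ q`. -/
inductive Microstep (Γ : PN → Seqp S PN L IP MSG DATA) :
    Seqp S PN L IP MSG DATA → Seqp S PN L IP MSG DATA → Prop where
  | choice_left  {p q : Seqp S PN L IP MSG DATA} : Microstep Γ (.choice p q) p
  | choice_right {p q : Seqp S PN L IP MSG DATA} : Microstep Γ (.choice p q) q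
  | call {pn : PN} : Microstep Γ (.call pn) (Γ pn)

/-- A specification is wellformed iff the converse of its microstep relation is wellfounded. -/
def Wellformed (Γ : PN → Seqp S PN L IP MSG DATA) : Prop :=
  WellFounded (fun p q => Microstep Γ q p)

/-- `Sterm Γ p q` holds iff `q ∈ sterms Γ p`: `sterms` unfolds choice and call
and is the singleton `{p}` on prefix terms. -/
inductive Sterm (Γ : PN → Seqp S PN L IP MSG DATA) :
    Seqp S PN L IP MSG DATA → Seqp S PN L IP MSG DATA → Prop where
  | prefix {p : Seqp S PN L IP MSG DATA} : ¬ p.isChoice → ¬ p.isCall → Sterm Γ p p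
  | choice_left  {p q r : Seqp S PN L IP MSG DATA} : Sterm Γ p r → Sterm Γ (.choice p q) r
  | choice_right {p q r : Seqp S PN L IP MSG DATA} : Sterm Γ q r → Sterm Γ (.choice p q) r
  | call {pn : PN} {r : Seqp S PN L IP MSG DATA} : Sterm Γ (Γ pn) r → Sterm Γ (.call pn) r

/-- `sterms Γ p` as a set. -/
def sterms (Γ : PN → Seqp S PN L IP MSG DATA) (p : Seqp S PN L IP MSG DATA) :
    Set (Seqp S PN L IP MSG DATA) :=
  {q | Sterm Γ p q}

/-- Local start terms. -/
def stermsl : Seqp S PN L IP MSG DATA → Set (Seqp S PN L IP MSG DATA)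
  | .choice p q => stermsl p ∪ stermsl q
  | p => {p}

/-- Local control terms. -/
def ctermsl : Seqp S PN L IP MSG DATA → Set (Seqp S PN L IP MSG DATA)
  | .assign l u p => insert (.assign l u p) (ctermsl p)
  | .guard l g p => insert (.guard l g p) (ctermsl p)
  | .ucast l fip fmsg p q => insert (.ucast l fip fmsg p q) (ctermsl p ∪ ctermsl q)
  | .bcast l fmsg p => insert (.bcast l fmsg p) (ctermsl p)
  | .gcast l fips fmsg p => insert (.gcast l fips fmsg p) (ctermsl p)
  | .send l fmsg p => insert (.send l fmsg p) (ctermsl p)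
  | .deliver l fdata p => insert (.deliver l fdata p) (ctermsl p)
  | .receive l u p => insert (.receive l u p) (ctermsl p)
  | .choice p q => ctermsl p ∪ ctermsl q
  | .call pn => {.call pn}

/-- `Dterm Γ p q` holds iff `q ∈ dterms Γ p`, the derivative terms of `p`. -/
inductive Dterm (Γ : PN → Seqp S PN L IP MSG DATA) :
    Seqp S PN L IP MSG DATA → Seqp S PN L IP MSG DATA → Prop where
  | choice_left  {p q r : Seqp S PN L IP MSG DATA} : Dterm Γ p r → Dterm Γ (.choice p q) r
  | choice_right {p q r : Seqp S PN L IP MSG DATA} : Dterm Γ q r → Dterm Γ (.choice p q) r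
  | call {pn : PN} {r : Seqp S PN L IP MSG DATA} : Dterm Γ (Γ pn) r → Dterm Γ (.call pn) r
  | assign {l : L} {u : S → S} {p r : Seqp S PN L IP MSG DATA} :
      Sterm Γ p r → Dterm Γ (.assign l u p) r
  | guard {l : L} {g : S → Set S} {p r : Seqp S PN L IP MSG DATA} :
      Sterm Γ p r → Dterm Γ (.guard l g p) r
  | ucast_left {l : L} {fip : S → IP} {fmsg : S → MSG} {p q r : Seqp S PN L IP MSG DATA} :
      Sterm Γ p r → Dterm Γ (.ucast l fip fmsg p q) r
  | ucast_right {l : L} {fip : S → IP} {fmsg : S → MSG} {p q r : Seqp S PN L IP MSG DATA} :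
      Sterm Γ q r → Dterm Γ (.ucast l fip fmsg p q) r
  | bcast {l : L} {fmsg : S → MSG} {p r : Seqp S PN L IP MSG DATA} :
      Sterm Γ p r → Dterm Γ (.bcast l fmsg p) r
  | gcast {l : L} {fips : S → Set IP} {fmsg : S → MSG} {p r : Seqp S PN L IP MSG DATA} :
      Sterm Γ p r → Dterm Γ (.gcast l fips fmsg p) r
  | send {l : L} {fmsg : S → MSG} {p r : Seqp S PN L IP MSG DATA} :
      Sterm Γ p r → Dterm Γ (.send l fmsg p) r
  | deliver {l : L} {fdata : S → DATA} {p r : Seqp S PN L IP MSG DATA} :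
      Sterm Γ p r → Dterm Γ (.deliver l fdata p) r
  | receive {l : L} {u : MSG → S → S} {p r : Seqp S PN L IP MSG DATA} :
      Sterm Γ p r → Dterm Γ (.receive l u p) r

/-- `dterms Γ p` as a set. -/
def dterms (Γ : PN → Seqp S PN L IP MSG DATA) (p : Seqp S PN L IP MSG DATA) :
    Set (Seqp S PN L IP MSG DATA) :=
  {q | Dterm Γ p q}

/-- `Cterm Γ p` holds iff `p ∈ cterms Γ`, the smallest set containing all
`sterms Γ (Γ pn)` and closed under `dterms`. -/
inductive Cterm (Γ : PN → Seqp S PN L IP MSG DATA) : Seqp S PN L IP MSG DATA → Prop where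
  | sterm {pn : PN} {p : Seqp S PN L IP MSG DATA} : Sterm Γ (Γ pn) p → Cterm Γ p
  | dterm {p q : Seqp S PN L IP MSG DATA} : Cterm Γ p → Dterm Γ p q → Cterm Γ q

/-- `cterms Γ` as a set. -/
def cterms (Γ : PN → Seqp S PN L IP MSG DATA) : Set (Seqp S PN L IP MSG DATA) :=
  {p | Cterm Γ p}

/-- Subterms of a sequential process term. -/
def subterms : Seqp S PN L IP MSG DATA → Set (Seqp S PN L IP MSG DATA)
  | .assign l u p => insert (.assign l u p) (subterms p)
  | .guard l g p => insert (.guard l g p) (subterms p)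
  | .ucast l fip fmsg p q => insert (.ucast l fip fmsg p q) (subterms p ∪ subterms q)
  | .bcast l fmsg p => insert (.bcast l fmsg p) (subterms p)
  | .gcast l fips fmsg p => insert (.gcast l fips fmsg p) (subterms p)
  | .send l fmsg p => insert (.send l fmsg p) (subterms p)
  | .deliver l fdata p => insert (.deliver l fdata p) (subterms p)
  | .receive l u p => insert (.receive l u p) (subterms p)
  | .choice p q => insert (.choice p q) (subterms p ∪ subterms q)
  | .call pn => {.call pn}



/-- Actions of sequential AWN processes. -/
inductive SeqAction (IP MSG DATA : Type) : Type where
  | broadcast  (m : MSG)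
  | groupcast  (ips : Set IP) (m : MSG)
  | unicast    (i : IP) (m : MSG)
  | notunicast (i : IP)
  | send       (m : MSG)
  | deliver    (d : DATA)
  | receive    (m : MSG)
  | tau

variable {S PN L IP MSG DATA : Type}

def SeqAction.isReceive : SeqAction IP MSG DATA → Prop
  | .receive _ => True
  | _ => False

def SeqAction.isSend : SeqAction IP MSG DATA → Prop
  | .send _ => True
  | _ => False

/-- The SOS rules of sequential AWN processes. -/
inductive SeqpSos (Γ : PN → Seqp S PN L IP MSG DATA) :
    S × Seqp S PN L IP MSG DATA → SeqAction IP MSG DATA → S × Seqp S PN L IP MSG DATA → Prop where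
  | assign {ξ : S} {l : L} {u : S → S} {p : Seqp S PN L IP MSG DATA} :
      SeqpSos Γ (ξ, .assign l u p) .tau (u ξ, p)
  | guard {ξ ξ' : S} {l : L} {g : S → Set S} {p : Seqp S PN L IP MSG DATA} :
      ξ' ∈ g ξ → SeqpSos Γ (ξ, .guard l g p) .tau (ξ', p)
  | ucast {ξ : S} {l : L} {fip : S → IP} {fmsg : S → MSG} {p q : Seqp S PN L IP MSG DATA} :
      SeqpSos Γ (ξ, .ucast l fip fmsg p q) (.unicast (fip ξ) (fmsg ξ)) (ξ, p)
  | notucast {ξ : S} {l : L} {fip : S → IP} {fmsg : S → MSG} {p q : Seqp S PN L IP MSG DATA} :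
      SeqpSos Γ (ξ, .ucast l fip fmsg p q) (.notunicast (fip ξ)) (ξ, q)
  | bcast {ξ : S} {l : L} {fmsg : S → MSG} {p : Seqp S PN L IP MSG DATA} :
      SeqpSos Γ (ξ, .bcast l fmsg p) (.broadcast (fmsg ξ)) (ξ, p)
  | gcast {ξ : S} {l : L} {fips : S → Set IP} {fmsg : S → MSG} {p : Seqp S PN L IP MSG DATA} :
      SeqpSos Γ (ξ, .gcast l fips fmsg p) (.groupcast (fips ξ) (fmsg ξ)) (ξ, p)
  | send {ξ : S} {l : L} {fmsg : S → MSG} {p : Seqp S PN L IP MSG DATA} :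
      SeqpSos Γ (ξ, .send l fmsg p) (.send (fmsg ξ)) (ξ, p)
  | deliver {ξ : S} {l : L} {fdata : S → DATA} {p : Seqp S PN L IP MSG DATA} :
      SeqpSos Γ (ξ, .deliver l fdata p) (.deliver (fdata ξ)) (ξ, p)
  | receive {ξ : S} {l : L} {u : MSG → S → S} {p : Seqp S PN L IP MSG DATA} (m : MSG) :
      SeqpSos Γ (ξ, .receive l u p) (.receive m) (u m ξ, p)
  | choice_left {ξ ξ' : S} {p q p' : Seqp S PN L IP MSG DATA} {a : SeqAction IP MSG DATA} :
      SeqpSos Γ (ξ, p) a (ξ', p') → SeqpSos Γ (ξ, .choice p q) a (ξ', p')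
  | choice_right {ξ ξ' : S} {p q p' : Seqp S PN L IP MSG DATA} {a : SeqAction IP MSG DATA} :
      SeqpSos Γ (ξ, q) a (ξ', p') → SeqpSos Γ (ξ, .choice p q) a (ξ', p')
  | call {ξ ξ' : S} {pn : PN} {p' : Seqp S PN L IP MSG DATA} {a : SeqAction IP MSG DATA} :
      SeqpSos Γ (ξ, Γ pn) a (ξ', p') → SeqpSos Γ (ξ, .call pn) a (ξ', p')

/-- An automaton: a set of initial states and a transition relation. -/
structure Automaton (σ α : Type) : Type where
  init : Set σ
  trans : σ → α → σ → Prop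

/-- Reachability under an assumption `I` on actions. -/
inductive Reachable {σ α : Type} (A : Automaton σ α) (I : α → Prop) : σ → Prop where
  | init {s : σ} : s ∈ A.init → Reachable A I s
  | step {s s' : σ} {a : α} : Reachable A I s → A.trans s a s' → I a → Reachable A I s'

/-- Invariance: `A ⊨ (I →) P`. -/
def Invariant {σ α : Type} (A : Automaton σ α) (I : α → Prop) (P : σ → Prop) : Prop :=
  ∀ s, Reachable A I s → P s

/-- Step invariance: `A ⊨A (I →) Q`. -/
def StepInvariant {σ α : Type} (A : Automaton σ α) (I : α → Prop) (Q : σ → α → σ → Prop) : Prop :=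
  ∀ s a s', Reachable A I s → A.trans s a s' → I a → Q s a s'

/-- The label(s) decorating the top-most constructor of a term. -/
def topLabels : Seqp S PN L IP MSG DATA → Set L
  | .assign l _ _ => {l}
  | .guard l _ _ => {l}
  | .ucast l _ _ _ _ => {l}
  | .bcast l _ _ => {l}
  | .gcast l _ _ _ => {l}
  | .send l _ _ => {l}
  | .deliver l _ _ => {l}
  | .receive l _ _ => {l}
  | .choice _ _ => ∅
  | .call _ => ∅

/-- The labels of the start terms of `p`. -/
def labels (Γ : PN → Seqp S PN L IP MSG DATA) (p : Seqp S PN L IP MSG DATA) : Set L :=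
  {l | ∃ q, Sterm Γ p q ∧ l ∈ topLabels q}

/-- `onl Γ P` holds of `(ξ, p)` iff `P (ξ, l)` for every label `l` of `p`. -/
def onl {X : Type} (Γ : PN → Seqp S PN L IP MSG DATA) (P : X × L → Prop)
    (s : X × Seqp S PN L IP MSG DATA) : Prop :=
  ∀ l ∈ labels Γ s.2, P (s.1, l)

/-- All control terms of initial states stem from the specification. -/
def ControlWithin {X : Type} (Γ : PN → Seqp S PN L IP MSG DATA)
    (I : Set (X × Seqp S PN L IP MSG DATA)) : Prop :=
  ∀ s ∈ I, ∃ pn, s.2 ∈ subterms (Γ pn)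

/-- Every subterm of the specification has exactly one label. -/
def SimpleLabels (Γ : PN → Seqp S PN L IP MSG DATA) : Prop :=
  ∀ pn p, p ∈ subterms (Γ pn) → ∃ l, labels Γ p = {l}



/-- Open SOS rules for sequential processes: the state pairs a global state
`σ : IP → S` with a control term, and the rules constrain only entry `i`. -/
inductive OseqpSos (Γ : PN → Seqp S PN L IP MSG DATA) (i : IP) :
    (IP → S) × Seqp S PN L IP MSG DATA → SeqAction IP MSG DATA →
    (IP → S) × Seqp S PN L IP MSG DATA → Prop where
  | assign {σ σ' : IP → S} {l : L} {u : S → S} {p : Seqp S PN L IP MSG DATA} :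
      σ' i = u (σ i) → OseqpSos Γ i (σ, .assign l u p) .tau (σ', p)
  | guard {σ σ' : IP → S} {l : L} {g : S → Set S} {p : Seqp S PN L IP MSG DATA} :
      σ' i ∈ g (σ i) → OseqpSos Γ i (σ, .guard l g p) .tau (σ', p)
  | ucast {σ σ' : IP → S} {l : L} {fip : S → IP} {fmsg : S → MSG}
      {p q : Seqp S PN L IP MSG DATA} :
      σ' i = σ i →
      OseqpSos Γ i (σ, .ucast l fip fmsg p q) (.unicast (fip (σ i)) (fmsg (σ i))) (σ', p)
  | notucast {σ σ' : IP → S} {l : L} {fip : S → IP} {fmsg : S → MSG}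
      {p q : Seqp S PN L IP MSG DATA} :
      σ' i = σ i →
      OseqpSos Γ i (σ, .ucast l fip fmsg p q) (.notunicast (fip (σ i))) (σ', q)
  | bcast {σ σ' : IP → S} {l : L} {fmsg : S → MSG} {p : Seqp S PN L IP MSG DATA} :
      σ' i = σ i → OseqpSos Γ i (σ, .bcast l fmsg p) (.broadcast (fmsg (σ i))) (σ', p)
  | gcast {σ σ' : IP → S} {l : L} {fips : S → Set IP} {fmsg : S → MSG}
      {p : Seqp S PN L IP MSG DATA} :
      σ' i = σ i →
      OseqpSos Γ i (σ, .gcast l fips fmsg p) (.groupcast (fips (σ i)) (fmsg (σ i))) (σ', p)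
  | send {σ σ' : IP → S} {l : L} {fmsg : S → MSG} {p : Seqp S PN L IP MSG DATA} :
      σ' i = σ i → OseqpSos Γ i (σ, .send l fmsg p) (.send (fmsg (σ i))) (σ', p)
  | deliver {σ σ' : IP → S} {l : L} {fdata : S → DATA} {p : Seqp S PN L IP MSG DATA} :
      σ' i = σ i → OseqpSos Γ i (σ, .deliver l fdata p) (.deliver (fdata (σ i))) (σ', p)
  | receive {σ σ' : IP → S} {l : L} {u : MSG → S → S} {p : Seqp S PN L IP MSG DATA} (m : MSG) :
      σ' i = u m (σ i) → OseqpSos Γ i (σ, .receive l u p) (.receive m) (σ', p)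
  | choice_left {σ σ' : IP → S} {p q p' : Seqp S PN L IP MSG DATA} {a : SeqAction IP MSG DATA} :
      OseqpSos Γ i (σ, p) a (σ', p') → OseqpSos Γ i (σ, .choice p q) a (σ', p')
  | choice_right {σ σ' : IP → S} {p q p' : Seqp S PN L IP MSG DATA} {a : SeqAction IP MSG DATA} :
      OseqpSos Γ i (σ, q) a (σ', p') → OseqpSos Γ i (σ, .choice p q) a (σ', p')
  | call {σ σ' : IP → S} {pn : PN} {p' : Seqp S PN L IP MSG DATA} {a : SeqAction IP MSG DATA} :
      OseqpSos Γ i (σ, Γ pn) a (σ', p') → OseqpSos Γ i (σ, .call pn) a (σ', p')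

/-- Open reachability: `S` constrains synchronized steps, `U` interleaved environment steps. -/
inductive Oreachable {G LS α : Type} (A : Automaton (G × LS) α)
    (S : G → G → α → Prop) (U : G → G → Prop) : G × LS → Prop where
  | init {s : G × LS} : s ∈ A.init → Oreachable A S U s
  | other {σ σ' : G} {ζ : LS} :
      Oreachable A S U (σ, ζ) → U σ σ' → Oreachable A S U (σ', ζ)
  | step {σ σ' : G} {ζ ζ' : LS} {a : α} :
      Oreachable A S U (σ, ζ) → A.trans (σ, ζ) a (σ', ζ') → S σ σ' a →
      Oreachable A S U (σ', ζ')

/-- Open invariance: `A ⊨ (S, U →) P`. -/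
def Oinvariant {G LS α : Type} (A : Automaton (G × LS) α)
    (S : G → G → α → Prop) (U : G → G → Prop) (P : G × LS → Prop) : Prop :=
  ∀ s, Oreachable A S U s → P s

/-- Open step invariance: `A ⊨A (S, U →) Q`. -/
def OstepInvariant {G LS α : Type} (A : Automaton (G × LS) α)
    (S : G → G → α → Prop) (U : G → G → Prop) (Q : (G × LS) → α → (G × LS) → Prop) : Prop :=
  ∀ s a s', Oreachable A S U s → A.trans s a s' → S s.1 s'.1 a → Q s a s'

def otherwith {α : Type} (E : S → S → Prop) (N : Set IP) (I : (IP → S) → α → Prop)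
    (σ σ' : IP → S) (a : α) : Prop :=
  (∀ j ∉ N, E (σ j) (σ' j)) ∧ I σ a

def other (F : S → S → Prop) (N : Set IP) (σ σ' : IP → S) : Prop :=
  (∀ j ∈ N, σ' j = σ j) ∧ (∀ j ∉ N, F (σ j) (σ' j))

def orecvmsg (R : (IP → S) → MSG → Prop) (σ : IP → S) : SeqAction IP MSG DATA → Prop :=
  fun a => ∀ m, a = .receive m → R σ m



/-- Actions at the node and network level. -/
inductive NodeAction (IP MSG DATA : Type) : Type where
  | cast       (R : Set IP) (m : MSG)              -- R:*cast(m)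
  | arrive     (H K : Set IP) (m : MSG)            -- H¬K:arrive(m)
  | deliver    (i : IP) (d : DATA)
  | connect    (i i' : IP)
  | disconnect (i i' : IP)
  | tau

/-- The local (non-synchronizing) node actions. -/
def NodeAction.isLocal : NodeAction IP MSG DATA → Prop
  | .tau => True
  | .deliver _ _ => True
  | _ => False

/-- States of (partial) networks: a tree of node states `s_R`. -/
inductive NetState (PS IP : Type) : Type where
  | node   (i : IP) (s : PS) (R : Set IP)
  | subnet (s t : NetState PS IP)

/-- The addresses occurring in a network state. -/
def netIps {PS : Type} : NetState PS IP → Set IP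
  | .node i _ _ => {i}
  | .subnet s t => netIps s ∪ netIps t

/-- Standard node SOS rules, wrapping a process automaton at address `i`. -/
inductive NodeSos {PS : Type} (A : Automaton PS (SeqAction IP MSG DATA)) (i : IP) :
    NetState PS IP → NodeAction IP MSG DATA → NetState PS IP → Prop where
  | bcast {s s' : PS} {R : Set IP} {m : MSG} :
      A.trans s (.broadcast m) s' → NodeSos A i (.node i s R) (.cast R m) (.node i s' R)
  | gcast {s s' : PS} {R D : Set IP} {m : MSG} :
      A.trans s (.groupcast D m) s' → NodeSos A i (.node i s R) (.cast (R ∩ D) m) (.node i s' R)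
  | ucast {s s' : PS} {R : Set IP} {d : IP} {m : MSG} :
      d ∈ R → A.trans s (.unicast d m) s' →
      NodeSos A i (.node i s R) (.cast {d} m) (.node i s' R)
  | notucast {s s' : PS} {R : Set IP} {d : IP} :
      d ∉ R → A.trans s (.notunicast d) s' → NodeSos A i (.node i s R) .tau (.node i s' R)
  | deliver {s s' : PS} {R : Set IP} {d : DATA} :
      A.trans s (.deliver d) s' → NodeSos A i (.node i s R) (.deliver i d) (.node i s' R)
  | tau {s s' : PS} {R : Set IP} :
      A.trans s .tau s' → NodeSos A i (.node i s R) .tau (.node i s' R)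
  | receive {s s' : PS} {R : Set IP} {m : MSG} :
      A.trans s (.receive m) s' →
      NodeSos A i (.node i s R) (.arrive {i} ∅ m) (.node i s' R)
  | not_arrive {s : PS} {R : Set IP} {m : MSG} :
      NodeSos A i (.node i s R) (.arrive ∅ {i} m) (.node i s R)
  | connect_this {s : PS} {R : Set IP} {i' : IP} :
      NodeSos A i (.node i s R) (.connect i i') (.node i s (R ∪ {i'}))
  | connect_that {s : PS} {R : Set IP} {i' : IP} :
      NodeSos A i (.node i s R) (.connect i' i) (.node i s (R ∪ {i'}))
  | connect_other {s : PS} {R : Set IP} {i' i'' : IP} :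
      i ≠ i' → i ≠ i'' →
      NodeSos A i (.node i s R) (.connect i' i'') (.node i s R)
  | disconnect_this {s : PS} {R : Set IP} {i' : IP} :
      NodeSos A i (.node i s R) (.disconnect i i') (.node i s (R \ {i'}))
  | disconnect_that {s : PS} {R : Set IP} {i' : IP} :
      NodeSos A i (.node i s R) (.disconnect i' i) (.node i s (R \ {i'}))
  | disconnect_other {s : PS} {R : Set IP} {i' i'' : IP} :
      i ≠ i' → i ≠ i'' →
      NodeSos A i (.node i s R) (.disconnect i' i'') (.node i s R)

/-- The node expression `⟨i : A : R₀⟩`. -/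
def node {PS : Type} (i : IP) (A : Automaton PS (SeqAction IP MSG DATA)) (R₀ : Set IP) :
    Automaton (NetState PS IP) (NodeAction IP MSG DATA) :=
  ⟨{x | ∃ s ∈ A.init, x = .node i s R₀}, NodeSos A i⟩

/-- Open node SOS rules, over a global state `σ : IP → S`. -/
inductive OnodeSos {PS : Type} (A : Automaton ((IP → S) × PS) (SeqAction IP MSG DATA)) (i : IP) :
    (IP → S) × NetState PS IP → NodeAction IP MSG DATA → (IP → S) × NetState PS IP → Prop where
  | bcast {σ σ' : IP → S} {s s' : PS} {R : Set IP} {m : MSG} :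
      A.trans (σ, s) (.broadcast m) (σ', s') →
      OnodeSos A i (σ, .node i s R) (.cast R m) (σ', .node i s' R)
  | gcast {σ σ' : IP → S} {s s' : PS} {R D : Set IP} {m : MSG} :
      A.trans (σ, s) (.groupcast D m) (σ', s') →
      OnodeSos A i (σ, .node i s R) (.cast (R ∩ D) m) (σ', .node i s' R)
  | ucast {σ σ' : IP → S} {s s' : PS} {R : Set IP} {d : IP} {m : MSG} :
      d ∈ R → A.trans (σ, s) (.unicast d m) (σ', s') →
      OnodeSos A i (σ, .node i s R) (.cast {d} m) (σ', .node i s' R)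
  | notucast {σ σ' : IP → S} {s s' : PS} {R : Set IP} {d : IP} :
      d ∉ R → A.trans (σ, s) (.notunicast d) (σ', s') → (∀ j, j ≠ i → σ' j = σ j) →
      OnodeSos A i (σ, .node i s R) .tau (σ', .node i s' R)
  | deliver {σ σ' : IP → S} {s s' : PS} {R : Set IP} {d : DATA} :
      A.trans (σ, s) (.deliver d) (σ', s') → (∀ j, j ≠ i → σ' j = σ j) →
      OnodeSos A i (σ, .node i s R) (.deliver i d) (σ', .node i s' R)
  | tau {σ σ' : IP → S} {s s' : PS} {R : Set IP} :
      A.trans (σ, s) .tau (σ', s') → (∀ j, j ≠ i → σ' j = σ j) →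
      OnodeSos A i (σ, .node i s R) .tau (σ', .node i s' R)
  | receive {σ σ' : IP → S} {s s' : PS} {R : Set IP} {m : MSG} :
      A.trans (σ, s) (.receive m) (σ', s') →
      OnodeSos A i (σ, .node i s R) (.arrive {i} ∅ m) (σ', .node i s' R)
  | not_arrive {σ σ' : IP → S} {s : PS} {R : Set IP} {m : MSG} :
      σ' i = σ i →
      OnodeSos A i (σ, .node i s R) (.arrive ∅ {i} m) (σ', .node i s R)
  | connect_this {σ σ' : IP → S} {s : PS} {R : Set IP} {i' : IP} :
      σ' i = σ i →
      OnodeSos A i (σ, .node i s R) (.connect i i') (σ', .node i s (R ∪ {i'}))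
  | connect_that {σ σ' : IP → S} {s : PS} {R : Set IP} {i' : IP} :
      σ' i = σ i →
      OnodeSos A i (σ, .node i s R) (.connect i' i) (σ', .node i s (R ∪ {i'}))
  | connect_other {σ σ' : IP → S} {s : PS} {R : Set IP} {i' i'' : IP} :
      i ≠ i' → i ≠ i'' → σ' i = σ i →
      OnodeSos A i (σ, .node i s R) (.connect i' i'') (σ', .node i s R)
  | disconnect_this {σ σ' : IP → S} {s : PS} {R : Set IP} {i' : IP} :
      σ' i = σ i →
      OnodeSos A i (σ, .node i s R) (.disconnect i i') (σ', .node i s (R \ {i'}))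
  | disconnect_that {σ σ' : IP → S} {s : PS} {R : Set IP} {i' : IP} :
      σ' i = σ i →
      OnodeSos A i (σ, .node i s R) (.disconnect i' i) (σ', .node i s (R \ {i'}))
  | disconnect_other {σ σ' : IP → S} {s : PS} {R : Set IP} {i' i'' : IP} :
      i ≠ i' → i ≠ i'' → σ' i = σ i →
      OnodeSos A i (σ, .node i s R) (.disconnect i' i'') (σ', .node i s R)

/-- The open node expression `⟨i : A : R₀⟩ₒ`. -/
def onode {PS : Type} (i : IP) (A : Automaton ((IP → S) × PS) (SeqAction IP MSG DATA))
    (R₀ : Set IP) : Automaton ((IP → S) × NetState PS IP) (NodeAction IP MSG DATA) :=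
  ⟨{x | ∃ σ s, (σ, s) ∈ A.init ∧ x = (σ, .node i s R₀)}, OnodeSos A i⟩

def oarrivemsg (I : (IP → S) → MSG → Prop) (σ : IP → S) : NodeAction IP MSG DATA → Prop :=
  fun a => ∀ H K m, a = .arrive H K m → I σ m



/-! ### Message queues and local parallel composition -/

/-- Transitions of the message queue `qmsg`. -/
inductive QmsgSos : List MSG → SeqAction IP MSG DATA → List MSG → Prop where
  | receive (q : List MSG) (m : MSG) : QmsgSos q (.receive m) (q ++ [m])
  | send (m : MSG) (q : List MSG) : QmsgSos (m :: q) (.send m) q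

/-- The message queue automaton. -/
def qmsg : Automaton (List MSG) (SeqAction IP MSG DATA) :=
  ⟨{[]}, QmsgSos⟩

/-- Standard local parallel composition: receives of `A` synchronize
with sends of `B`, becoming `τ`. -/
inductive ParSos {PS QS : Type} (TA : PS → SeqAction IP MSG DATA → PS → Prop)
    (TB : QS → SeqAction IP MSG DATA → QS → Prop) :
    PS × QS → SeqAction IP MSG DATA → PS × QS → Prop where
  | left {s s' : PS} {q : QS} {a : SeqAction IP MSG DATA} :
      TA s a s' → ¬ a.isReceive → ParSos TA TB (s, q) a (s', q)
  | right {s : PS} {q q' : QS} {a : SeqAction IP MSG DATA} :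
      TB q a q' → ¬ a.isSend → ParSos TA TB (s, q) a (s, q')
  | comm {s s' : PS} {q q' : QS} {m : MSG} :
      TA s (.receive m) s' → TB q (.send m) q' → ParSos TA TB (s, q) .tau (s', q')

/-- `A ⟨⟨ B`. -/
def par {PS QS : Type} (A : Automaton PS (SeqAction IP MSG DATA))
    (B : Automaton QS (SeqAction IP MSG DATA)) :
    Automaton (PS × QS) (SeqAction IP MSG DATA) :=
  ⟨{x | x.1 ∈ A.init ∧ x.2 ∈ B.init}, ParSos A.trans B.trans⟩

/-- Open local parallel composition with a (closed) automaton `B` on the right: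
only the left component constrains the global state. -/
inductive OparSos {G PS QS : Type} (TA : G × PS → SeqAction IP MSG DATA → G × PS → Prop)
    (TB : QS → SeqAction IP MSG DATA → QS → Prop) :
    G × (PS × QS) → SeqAction IP MSG DATA → G × (PS × QS) → Prop where
  | left {σ σ' : G} {s s' : PS} {q : QS} {a : SeqAction IP MSG DATA} :
      TA (σ, s) a (σ', s') → ¬ a.isReceive → OparSos TA TB (σ, (s, q)) a (σ', (s', q))
  | right {σ : G} {s : PS} {q q' : QS} {a : SeqAction IP MSG DATA} :
      TB q a q' → ¬ a.isSend → OparSos TA TB (σ, (s, q)) a (σ, (s, q'))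
  | comm {σ σ' : G} {s s' : PS} {q q' : QS} {m : MSG} :
      TA (σ, s) (.receive m) (σ', s') → TB q (.send m) q' →
      OparSos TA TB (σ, (s, q)) .tau (σ', (s', q'))

/-- `A ⟨⟨ᵢ qmsg`: the open parallel composition of `A` with the message queue. -/
def oparQmsg {G PS : Type} (A : Automaton (G × PS) (SeqAction IP MSG DATA)) :
    Automaton (G × (PS × List MSG)) (SeqAction IP MSG DATA) :=
  ⟨{x | (x.1, x.2.1) ∈ A.init ∧ x.2.2 = []}, OparSos A.trans (qmsg (IP := IP) (DATA := DATA)).trans⟩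

/-! ### Network trees and partial networks -/

/-- Network structure terms. -/
inductive NetTree (IP : Type) : Type where
  | node (i : IP) (R : Set IP)
  | par (t₁ t₂ : NetTree IP)

/-- The addresses of a network tree. -/
def netTreeIps : NetTree IP → Set IP
  | .node i _ => {i}
  | .par t₁ t₂ => netTreeIps t₁ ∪ netTreeIps t₂

/-- Disjointness of the addresses of a network tree. -/
def WfNetTree : NetTree IP → Prop
  | .node _ _ => True
  | .par t₁ t₂ => netTreeIps t₁ ∩ netTreeIps t₂ = ∅ ∧ WfNetTree t₁ ∧ WfNetTree t₂

/-- Standard SOS rules for (partial) networks. -/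
inductive PnetSos {PS : Type}
    (T₁ T₂ : NetState PS IP → NodeAction IP MSG DATA → NetState PS IP → Prop) :
    NetState PS IP → NodeAction IP MSG DATA → NetState PS IP → Prop where
  | cast_left {s s' t t' : NetState PS IP} {R H K : Set IP} {m : MSG} :
      T₁ s (.cast R m) s' → T₂ t (.arrive H K m) t' → H ⊆ R → K ∩ R = ∅ →
      PnetSos T₁ T₂ (.subnet s t) (.cast R m) (.subnet s' t')
  | cast_right {s s' t t' : NetState PS IP} {R H K : Set IP} {m : MSG} :
      T₁ s (.arrive H K m) s' → T₂ t (.cast R m) t' → H ⊆ R → K ∩ R = ∅ →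
      PnetSos T₁ T₂ (.subnet s t) (.cast R m) (.subnet s' t')
  | arrive {s s' t t' : NetState PS IP} {H₁ K₁ H₂ K₂ : Set IP} {m : MSG} :
      T₁ s (.arrive H₁ K₁ m) s' → T₂ t (.arrive H₂ K₂ m) t' →
      PnetSos T₁ T₂ (.subnet s t) (.arrive (H₁ ∪ H₂) (K₁ ∪ K₂) m) (.subnet s' t')
  | tau_left {s s' t : NetState PS IP} :
      T₁ s .tau s' → PnetSos T₁ T₂ (.subnet s t) .tau (.subnet s' t)
  | tau_right {s t t' : NetState PS IP} :
      T₂ t .tau t' → PnetSos T₁ T₂ (.subnet s t) .tau (.subnet s t')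
  | deliver_left {s s' t : NetState PS IP} {i : IP} {d : DATA} :
      T₁ s (.deliver i d) s' → PnetSos T₁ T₂ (.subnet s t) (.deliver i d) (.subnet s' t)
  | deliver_right {s t t' : NetState PS IP} {i : IP} {d : DATA} :
      T₂ t (.deliver i d) t' → PnetSos T₁ T₂ (.subnet s t) (.deliver i d) (.subnet s t')
  | connect {s s' t t' : NetState PS IP} {i i' : IP} :
      T₁ s (.connect i i') s' → T₂ t (.connect i i') t' →
      PnetSos T₁ T₂ (.subnet s t) (.connect i i') (.subnet s' t')
  | disconnect {s s' t t' : NetState PS IP} {i i' : IP} :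
      T₁ s (.disconnect i i') s' → T₂ t (.disconnect i i') t' →
      PnetSos T₁ T₂ (.subnet s t) (.disconnect i i') (.subnet s' t')

/-- The standard network automaton of a network tree. -/
def pnet {PS : Type} (np : IP → Automaton PS (SeqAction IP MSG DATA)) :
    NetTree IP → Automaton (NetState PS IP) (NodeAction IP MSG DATA)
  | .node i R => node i (np i) R
  | .par t₁ t₂ =>
      ⟨{x | ∃ s t, s ∈ (pnet np t₁).init ∧ t ∈ (pnet np t₂).init ∧ x = .subnet s t},
       PnetSos (pnet np t₁).trans (pnet np t₂).trans⟩

/-- Open SOS rules for (partial) networks. -/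
inductive OpnetSos {PS : Type}
    (T₁ T₂ : (IP → S) × NetState PS IP → NodeAction IP MSG DATA →
             (IP → S) × NetState PS IP → Prop) :
    (IP → S) × NetState PS IP → NodeAction IP MSG DATA → (IP → S) × NetState PS IP → Prop where
  | cast_left {σ σ' : IP → S} {s s' t t' : NetState PS IP} {R H K : Set IP} {m : MSG} :
      T₁ (σ, s) (.cast R m) (σ', s') → T₂ (σ, t) (.arrive H K m) (σ', t') →
      H ⊆ R → K ∩ R = ∅ →
      OpnetSos T₁ T₂ (σ, .subnet s t) (.cast R m) (σ', .subnet s' t')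
  | cast_right {σ σ' : IP → S} {s s' t t' : NetState PS IP} {R H K : Set IP} {m : MSG} :
      T₁ (σ, s) (.arrive H K m) (σ', s') → T₂ (σ, t) (.cast R m) (σ', t') →
      H ⊆ R → K ∩ R = ∅ →
      OpnetSos T₁ T₂ (σ, .subnet s t) (.cast R m) (σ', .subnet s' t')
  | arrive {σ σ' : IP → S} {s s' t t' : NetState PS IP} {H₁ K₁ H₂ K₂ : Set IP} {m : MSG} :
      T₁ (σ, s) (.arrive H₁ K₁ m) (σ', s') → T₂ (σ, t) (.arrive H₂ K₂ m) (σ', t') →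
      OpnetSos T₁ T₂ (σ, .subnet s t) (.arrive (H₁ ∪ H₂) (K₁ ∪ K₂) m) (σ', .subnet s' t')
  | tau_left {σ σ' : IP → S} {s s' t : NetState PS IP} :
      T₁ (σ, s) .tau (σ', s') → (∀ j ∈ netIps t, σ' j = σ j) →
      OpnetSos T₁ T₂ (σ, .subnet s t) .tau (σ', .subnet s' t)
  | tau_right {σ σ' : IP → S} {s t t' : NetState PS IP} :
      T₂ (σ, t) .tau (σ', t') → (∀ j ∈ netIps s, σ' j = σ j) →
      OpnetSos T₁ T₂ (σ, .subnet s t) .tau (σ', .subnet s t')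
  | deliver_left {σ σ' : IP → S} {s s' t : NetState PS IP} {i : IP} {d : DATA} :
      T₁ (σ, s) (.deliver i d) (σ', s') → (∀ j ∈ netIps t, σ' j = σ j) →
      OpnetSos T₁ T₂ (σ, .subnet s t) (.deliver i d) (σ', .subnet s' t)
  | deliver_right {σ σ' : IP → S} {s t t' : NetState PS IP} {i : IP} {d : DATA} :
      T₂ (σ, t) (.deliver i d) (σ', t') → (∀ j ∈ netIps s, σ' j = σ j) →
      OpnetSos T₁ T₂ (σ, .subnet s t) (.deliver i d) (σ', .subnet s t')
  | connect {σ σ' : IP → S} {s s' t t' : NetState PS IP} {i i' : IP} :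
      T₁ (σ, s) (.connect i i') (σ', s') → T₂ (σ, t) (.connect i i') (σ', t') →
      OpnetSos T₁ T₂ (σ, .subnet s t) (.connect i i') (σ', .subnet s' t')
  | disconnect {σ σ' : IP → S} {s s' t t' : NetState PS IP} {i i' : IP} :
      T₁ (σ, s) (.disconnect i i') (σ', s') → T₂ (σ, t) (.disconnect i i') (σ', t') →
      OpnetSos T₁ T₂ (σ, .subnet s t) (.disconnect i i') (σ', .subnet s' t')

/-- The open network automaton of a network tree. -/
def opnet {PS : Type} (onp : IP → Automaton ((IP → S) × PS) (SeqAction IP MSG DATA)) :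
    NetTree IP → Automaton ((IP → S) × NetState PS IP) (NodeAction IP MSG DATA)
  | .node i R => onode i (onp i) R
  | .par t₁ t₂ =>
      ⟨{x | ∃ σ s t, (σ, s) ∈ (opnet onp t₁).init ∧ (σ, t) ∈ (opnet onp t₂).init ∧
            x = (σ, .subnet s t)},
       OpnetSos (opnet onp t₁).trans (opnet onp t₂).trans⟩

/-! ### Closed networks -/

/-- SOS rules closing a network: `*cast` becomes `τ`, `arrive` is forbidden. -/
inductive CnetSos {NS : Type} (T : NS → NodeAction IP MSG DATA → NS → Prop) :
    NS → NodeAction IP MSG DATA → NS → Prop where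
  | cast {s s' : NS} {R : Set IP} {m : MSG} : T s (.cast R m) s' → CnetSos T s .tau s'
  | tau {s s' : NS} : T s .tau s' → CnetSos T s .tau s'
  | deliver {s s' : NS} {i : IP} {d : DATA} :
      T s (.deliver i d) s' → CnetSos T s (.deliver i d) s'
  | connect {s s' : NS} {i i' : IP} :
      T s (.connect i i') s' → CnetSos T s (.connect i i') s'
  | disconnect {s s' : NS} {i i' : IP} :
      T s (.disconnect i i') s' → CnetSos T s (.disconnect i i') s'

/-- The closed network automaton. -/
def closed {NS : Type} (A : Automaton NS (NodeAction IP MSG DATA)) :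
    Automaton NS (NodeAction IP MSG DATA) :=
  ⟨A.init, CnetSos A.trans⟩

/-- Open SOS rules closing a network: additionally, global entries not
addressed within the network may not change. -/
inductive OcnetSos {LS : Type}
    (T : (IP → S) × NetState LS IP → NodeAction IP MSG DATA →
         (IP → S) × NetState LS IP → Prop) :
    (IP → S) × NetState LS IP → NodeAction IP MSG DATA → (IP → S) × NetState LS IP → Prop where
  | cast {σ σ' : IP → S} {s s' : NetState LS IP} {R : Set IP} {m : MSG} :
      (∀ j ∉ netIps s, σ' j = σ j) → T (σ, s) (.cast R m) (σ', s') →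
      OcnetSos T (σ, s) .tau (σ', s')
  | tau {σ σ' : IP → S} {s s' : NetState LS IP} :
      (∀ j ∉ netIps s, σ' j = σ j) → T (σ, s) .tau (σ', s') →
      OcnetSos T (σ, s) .tau (σ', s')
  | deliver {σ σ' : IP → S} {s s' : NetState LS IP} {i : IP} {d : DATA} :
      (∀ j ∉ netIps s, σ' j = σ j) → T (σ, s) (.deliver i d) (σ', s') →
      OcnetSos T (σ, s) (.deliver i d) (σ', s')
  | connect {σ σ' : IP → S} {s s' : NetState LS IP} {i i' : IP} :
      (∀ j ∉ netIps s, σ' j = σ j) → T (σ, s) (.connect i i') (σ', s') →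
      OcnetSos T (σ, s) (.connect i i') (σ', s')
  | disconnect {σ σ' : IP → S} {s s' : NetState LS IP} {i i' : IP} :
      (∀ j ∉ netIps s, σ' j = σ j) → T (σ, s) (.disconnect i i') (σ', s') →
      OcnetSos T (σ, s) (.disconnect i i') (σ', s')

/-- The closed open-network automaton. -/
def oclosed {LS : Type} (A : Automaton ((IP → S) × NetState LS IP) (NodeAction IP MSG DATA)) :
    Automaton ((IP → S) × NetState LS IP) (NodeAction IP MSG DATA) :=
  ⟨A.init, OcnetSos A.trans⟩

/-! ### The openproc locale -/

/-- The `openproc` locale: `sr` splits states of `np i` into a global and a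
local component, the initial states correspond, and `onp` simulates `np`. -/
structure Openproc {PS LS : Type} (np : IP → Automaton PS (SeqAction IP MSG DATA))
    (onp : IP → Automaton ((IP → S) × LS) (SeqAction IP MSG DATA))
    (sr : PS → S × LS) : Prop where
  init : ∀ (i : IP) (σ : IP → S) (ζ : LS),
      (∃ s ∈ (np i).init, (σ i, ζ) = sr s) →
      (∀ j, j ≠ i → ∃ s ∈ (np j).init, σ j = (sr s).1) →
      (σ, ζ) ∈ (onp i).init
  init_notempty : ∀ j, ((np j).init).Nonempty
  sim : ∀ (i : IP) (s s' : PS) (a : SeqAction IP MSG DATA) (σ σ' : IP → S),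
      (np i).trans s a s' → σ i = (sr s).1 → σ' i = (sr s').1 →
      (onp i).trans (σ, (sr s).2) a (σ', (sr s').2)

/-- An arbitrary initial global component for `np i`. -/
noncomputable def someinit {PS LS : Type} [Nonempty S]
    (np : IP → Automaton PS (SeqAction IP MSG DATA)) (sr : PS → S × LS) (i : IP) : S :=
  Classical.epsilon fun x => ∃ s ∈ (np i).init, x = (sr s).1

/-- The partial map from addresses to global components of node states. -/
def netlift {PS LS : Type} [DecidableEq IP] (sr : PS → S × LS) :
    NetState PS IP → IP → Option S
  | .node i s _ => fun j => if j = i then some (sr s).1 else none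
  | .subnet s t => fun j => (netlift sr s j).orElse (fun _ => netlift sr t j)

/-- The tree of local components of a network state. -/
def netliftl {PS LS : Type} (sr : PS → S × LS) : NetState PS IP → NetState LS IP
  | .node i s R => .node i (sr s).2 R
  | .subnet s t => .subnet (netliftl sr s) (netliftl sr t)

/-- The open state corresponding to a standard network state. -/
noncomputable def netgmap {PS LS : Type} [DecidableEq IP] [Nonempty S]
    (np : IP → Automaton PS (SeqAction IP MSG DATA)) (sr : PS → S × LS)
    (s : NetState PS IP) : (IP → S) × NetState LS IP :=
  ((fun j => (netlift sr s j).getD (someinit np sr j)), netliftl sr s)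



/-! ### The toy protocol -/

/-- Messages of the toy protocol. -/
inductive ToyMsg : Type where
  | newpkt (data dst : ℕ)
  | pkt (data src : ℕ)

/-- Data states of the toy protocol. -/
structure ToyState : Type where
  ip : ℕ
  no : ℕ
  num : ℕ
  sip : ℕ
  nhip : ℕ
  msg : ToyMsg

/-- The single process name of the toy protocol. -/
inductive ToyPN : Type where
  | PToy

abbrev ToySeqp : Type := Seqp ToyState ToyPN ℕ ℕ ToyMsg ℕ

/-- The `is_newpkt` guard: succeeds iff `msg ξ = newpkt d dst`, setting `num := d`. -/
def isNewpkt : ToyState → Set ToyState := fun ξ =>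
  {ξ' | ∃ d dst, ξ.msg = .newpkt d dst ∧ ξ' = { ξ with num := d }}

/-- The `is_pkt` guard: succeeds iff `msg ξ = pkt d src`, setting `num := d`, `sip := src`. -/
def isPkt : ToyState → Set ToyState := fun ξ =>
  {ξ' | ∃ d src, ξ.msg = .pkt d src ∧ ξ' = { ξ with num := d, sip := src }}

/-- `Toy()`: reset the local variables `msg`, `num` and `sip` to fixed
defaults and call `PToy`; `l` is the label of the resetting assignment. -/
def toyReset (l : ℕ) : ToySeqp :=
  .assign l (fun ξ => { ξ with msg := .newpkt 0 0, num := 0, sip := 0 }) (.call .PToy)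

/-- The specification `Γ_Toy` of the toy protocol. -/
def toySpec : ToyPN → ToySeqp := fun _ =>
  .receive 0 (fun m ξ => { ξ with msg := m }) <|
  .assign 1 (fun ξ => { ξ with nhip := ξ.ip }) <|
  .choice
    (.guard 2 isNewpkt <|
      .assign 3 (fun ξ => { ξ with no := max ξ.no ξ.num }) <|
      .bcast 4 (fun ξ => .pkt ξ.no ξ.ip) <| toyReset 5)
    (.guard 2 isPkt <|
      .choice
        (.guard 6 (fun ξ => if ξ.num ≥ ξ.no then {ξ} else ∅) <|
          .assign 7 (fun ξ => { ξ with no := ξ.num }) <|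
          .assign 8 (fun ξ => { ξ with nhip := ξ.sip }) <|
          .bcast 9 (fun ξ => .pkt ξ.no ξ.ip) <| toyReset 10)
        (.guard 6 (fun ξ => if ξ.num < ξ.no then {ξ} else ∅) <| toyReset 11))

/-- The initial data state of node `i`. -/
def toyInit (i : ℕ) : ToyState :=
  { ip := i, no := 0, num := 0, sip := 0, nhip := i, msg := .newpkt 0 0 }

instance : Nonempty ToyState := ⟨toyInit 0⟩

/-- The sequential toy-protocol automaton at address `i`. -/
def ptoy (i : ℕ) : Automaton (ToyState × ToySeqp) (SeqAction ℕ ToyMsg ℕ) :=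
  ⟨{(toyInit i, toySpec .PToy)}, fun s a s' => SeqpSos toySpec s a s'⟩

/-- The open sequential toy-protocol automaton at address `i`. -/
def optoy (i : ℕ) : Automaton ((ℕ → ToyState) × ToySeqp) (SeqAction ℕ ToyMsg ℕ) :=
  ⟨{x | x.1 i = toyInit i ∧ x.2 = toySpec .PToy}, fun s a s' => OseqpSos toySpec i s a s'⟩

/-- The `no` field never decreases. -/
def nosIncrease (ξ ξ' : ToyState) : Prop := ξ.no ≤ ξ'.no

/-- Incoming `pkt` messages reflect the state of the sender. -/
def msgNumOk (σ : ℕ → ToyState) : ToyMsg → Prop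
  | .pkt d src => d ≤ (σ src).no
  | .newpkt _ _ => True

/-- `sr` for the toy protocol composed with `qmsg`. -/
def srToy : (ToyState × ToySeqp) × List ToyMsg → ToyState × (ToySeqp × List ToyMsg) :=
  fun s => (s.1.1, (s.1.2, s.2))

/-- Lift a predicate on global states to standard toy network states. -/
def toyNetglobal (P : (ℕ → ToyState) → Prop)
    (s : NetState ((ToyState × ToySeqp) × List ToyMsg) ℕ) : Prop :=
  P (fun j => ((netlift srToy s) j).getD (toyInit j))


/-! ### Auxiliary definitions and lemmas for the sequential toy invariant -/

/-- Continuation terms of the toy protocol. -/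
def toyT9 : ToySeqp := .bcast 9 (fun ξ => .pkt ξ.no ξ.ip) (toyReset 10)
def toyT8 : ToySeqp := .assign 8 (fun ξ => { ξ with nhip := ξ.sip }) toyT9
def toyT7 : ToySeqp := .assign 7 (fun ξ => { ξ with no := ξ.num }) toyT8
def toyT6 : ToySeqp :=
  .choice (.guard 6 (fun ξ => if ξ.num ≥ ξ.no then {ξ} else ∅) toyT7)
          (.guard 6 (fun ξ => if ξ.num < ξ.no then {ξ} else ∅) (toyReset 11))
def toyT4 : ToySeqp := .bcast 4 (fun ξ => .pkt ξ.no ξ.ip) (toyReset 5)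
def toyT3 : ToySeqp := .assign 3 (fun ξ => { ξ with no := max ξ.no ξ.num }) toyT4
def toyT2 : ToySeqp := .choice (.guard 2 isNewpkt toyT3) (.guard 2 isPkt toyT6)
def toyT1 : ToySeqp := .assign 1 (fun ξ => { ξ with nhip := ξ.ip }) toyT2

lemma toySpec_eq : toySpec .PToy = .receive 0 (fun m ξ => { ξ with msg := m }) toyT1 := rfl

/-- The basic part of the strengthened invariant. -/
def toyBase (i : ℕ) (σ : ℕ → ToyState) : Prop :=
  (σ i).ip = i ∧ (σ i).no ≤ (σ ((σ i).nhip)).no ∧ msgNumOk σ ((σ i).msg)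

/-- The strengthened invariant. -/
def toyInv (i : ℕ) (σ : ℕ → ToyState) (p : ToySeqp) : Prop :=
  toyBase i σ ∧
  (p = toySpec .PToy ∨ p = toyT1 ∨
   (p = toyT2 ∧ (σ i).nhip = i) ∨
   (p = toyT3 ∧ (σ i).nhip = i) ∨
   p = toyT4 ∨ p = toyReset 5 ∨ p = Seqp.call .PToy ∨
   (p = toyT6 ∧ (σ i).nhip = i ∧ (σ i).msg = .pkt (σ i).num (σ i).sip) ∨
   (p = toyT7 ∧ (σ i).nhip = i ∧ (σ i).msg = .pkt (σ i).num (σ i).sip ∧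
      (σ i).no ≤ (σ i).num) ∨
   (p = toyT8 ∧ (σ i).no ≤ (σ ((σ i).sip)).no) ∨
   p = toyT9 ∨ p = toyReset 10 ∨ p = toyReset 11)

lemma no_mono_all {σ σ' : ℕ → ToyState} {i : ℕ}
    (h : ∀ j ∉ ({i} : Set ℕ), nosIncrease (σ j) (σ' j))
    (hi : (σ i).no ≤ (σ' i).no) : ∀ j, (σ j).no ≤ (σ' j).no := by
  intro j
  by_cases hj : j = i
  · subst hj; exact hi
  · exact h j (by simp [hj])

lemma msgNumOk_mono {σ σ' : ℕ → ToyState} {m : ToyMsg}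
    (h : msgNumOk σ m) (hmono : ∀ j, (σ j).no ≤ (σ' j).no) : msgNumOk σ' m := by
  cases m with
  | newpkt _ _ => trivial
  | pkt d src => exact le_trans h (hmono src)

lemma toyBase_keep {i : ℕ} {σ σ' : ℕ → ToyState}
    (h : toyBase i σ) (hi : σ' i = σ i)
    (hmono : ∀ j, (σ j).no ≤ (σ' j).no) : toyBase i σ' := by
  obtain ⟨hA, hB, hC⟩ := h
  refine ⟨hi ▸ hA, ?_, ?_⟩
  · rw [hi]; exact le_trans hB (hmono _)
  · rw [hi]; exact msgNumOk_mono hC hmono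

lemma toy_recv_step {i : ℕ} {σ σ' : ℕ → ToyState} {m : ToyMsg}
    (hb : toyBase i σ) (hm : msgNumOk σ m)
    (hE : ∀ j ∉ ({i} : Set ℕ), nosIncrease (σ j) (σ' j))
    (hσ : σ' i = { σ i with msg := m }) : toyInv i σ' toyT1 := by
  obtain ⟨hA, hB, hC⟩ := hb
  have hmono : ∀ j, (σ j).no ≤ (σ' j).no :=
    no_mono_all hE (le_of_eq (by rw [hσ]))
  refine ⟨⟨by rw [hσ]; exact hA, ?_, ?_⟩, Or.inr (Or.inl rfl)⟩
  · rw [hσ]; exact le_trans hB (hmono _)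
  · rw [hσ]; exact msgNumOk_mono hm hmono

lemma toy_reset_step {i : ℕ} {σ σ' : ℕ → ToyState}
    (hb : toyBase i σ)
    (hE : ∀ j ∉ ({i} : Set ℕ), nosIncrease (σ j) (σ' j))
    (hσ : σ' i = { σ i with msg := .newpkt 0 0, num := 0, sip := 0 }) :
    toyInv i σ' (Seqp.call .PToy) := by
  obtain ⟨hA, hB, hC⟩ := hb
  have hmono : ∀ j, (σ j).no ≤ (σ' j).no :=
    no_mono_all hE (le_of_eq (by rw [hσ]))
  refine ⟨⟨by rw [hσ]; exact hA, ?_, ?_⟩,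
    Or.inr (Or.inr (Or.inr (Or.inr (Or.inr (Or.inr (Or.inl rfl))))))⟩
  · rw [hσ]; exact le_trans hB (hmono _)
  · rw [hσ]; trivial

/-- The strengthened invariant holds at all open-reachable states. -/
lemma toyInv_oreachable (i : ℕ) :
    ∀ s, Oreachable (optoy i)
      (otherwith nosIncrease {i} (orecvmsg msgNumOk))
      (other nosIncrease {i}) s → toyInv i s.1 s.2 := by
  intro s hr
  induction hr with
  | init h =>
    obtain ⟨h1, h2⟩ := h
    refine ⟨⟨by rw [h1]; rfl, by rw [h1]; exact Nat.zero_le _, by rw [h1]; trivial⟩,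
      Or.inl h2⟩
  | other hr hU ih =>
    rename_i σ σ' ζ
    dsimp only at ih ⊢
    obtain ⟨⟨hA, hB, hC⟩, hd⟩ := ih
    have hi : σ' i = σ i := hU.1 i rfl
    have hmono : ∀ j, (σ j).no ≤ (σ' j).no :=
      no_mono_all hU.2 (le_of_eq (by rw [hi]))
    refine ⟨toyBase_keep ⟨hA, hB, hC⟩ hi hmono, ?_⟩
    rcases hd with h|h|⟨h,h2⟩|⟨h,h2⟩|h|h|h|⟨h,h2,h3⟩|⟨h,h2,h3,h4⟩|⟨h,h2⟩|h|h|h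
    · exact Or.inl h
    · exact Or.inr (Or.inl h)
    · exact Or.inr (Or.inr (Or.inl ⟨h, by rw [hi]; exact h2⟩))
    · exact Or.inr (Or.inr (Or.inr (Or.inl ⟨h, by rw [hi]; exact h2⟩)))
    · exact Or.inr (Or.inr (Or.inr (Or.inr (Or.inl h))))
    · exact Or.inr (Or.inr (Or.inr (Or.inr (Or.inr (Or.inl h)))))
    · exact Or.inr (Or.inr (Or.inr (Or.inr (Or.inr (Or.inr (Or.inl h))))))
    · exact Or.inr (Or.inr (Or.inr (Or.inr (Or.inr (Or.inr (Or.inr (Or.inl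
        ⟨h, by rw [hi]; exact h2, by rw [hi]; exact h3⟩)))))))
    · exact Or.inr (Or.inr (Or.inr (Or.inr (Or.inr (Or.inr (Or.inr (Or.inr (Or.inl
        ⟨h, by rw [hi]; exact h2, by rw [hi]; exact h3, by rw [hi]; exact h4⟩))))))))
    · exact Or.inr (Or.inr (Or.inr (Or.inr (Or.inr (Or.inr (Or.inr (Or.inr (Or.inr (Or.inl
        ⟨h, by rw [hi]; exact le_trans h2 (hmono _)⟩)))))))))
    · exact Or.inr (Or.inr (Or.inr (Or.inr (Or.inr (Or.inr (Or.inr (Or.inr (Or.inr (Or.inr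
        (Or.inl h))))))))))
    · exact Or.inr (Or.inr (Or.inr (Or.inr (Or.inr (Or.inr (Or.inr (Or.inr (Or.inr (Or.inr
        (Or.inr (Or.inl h)))))))))))
    · exact Or.inr (Or.inr (Or.inr (Or.inr (Or.inr (Or.inr (Or.inr (Or.inr (Or.inr (Or.inr
        (Or.inr (Or.inr h)))))))))))
  | step hr ht hS ih =>
    rename_i σ σ' ζ ζ' a
    dsimp only at ih ht hS ⊢
    obtain ⟨⟨hA, hB, hC⟩, hd⟩ := ih
    obtain ⟨hE, hI⟩ := hS
    rcases hd with h|h|⟨h,h2⟩|⟨h,h2⟩|h|h|h|⟨h,h2,h3⟩|⟨h,h2,h3,h4⟩|⟨h,h2⟩|h|h|h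
    -- ζ = toySpec .PToy
    · subst h
      rw [toySpec_eq] at ht
      cases ht with
      | receive m hσ =>
        exact toy_recv_step ⟨hA, hB, hC⟩ (hI m rfl) hE hσ
    -- ζ = toyT1 (assign 1: nhip := ip)
    · subst h
      simp only [toyT1] at ht
      cases ht with
      | assign hσ =>
        have hσ' : σ' i = { σ i with nhip := (σ i).ip } := hσ
        have hmono : ∀ j, (σ j).no ≤ (σ' j).no :=
          no_mono_all hE (le_of_eq (by rw [hσ']))
        refine ⟨⟨by rw [hσ']; exact hA, ?_, ?_⟩,
          Or.inr (Or.inr (Or.inl ⟨rfl, by rw [hσ']; exact hA⟩))⟩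
        · have hnh : (σ' i).nhip = i := by rw [hσ']; exact hA
          rw [hnh]
        · rw [hσ']; exact msgNumOk_mono hC hmono
    -- ζ = toyT2 (choice of guards 2)
    · subst h
      simp only [toyT2] at ht
      cases ht with
      | choice_left h' =>
        cases h' with
        | guard hg =>
          obtain ⟨d, dst, hmsg, heq⟩ := hg
          have hmono : ∀ j, (σ j).no ≤ (σ' j).no :=
            no_mono_all hE (le_of_eq (by rw [heq]))
          refine ⟨⟨by rw [heq]; exact hA, ?_, ?_⟩,
            Or.inr (Or.inr (Or.inr (Or.inl ⟨rfl, by rw [heq]; exact h2⟩)))⟩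
          · have hnh : (σ' i).nhip = i := by rw [heq]; exact h2
            rw [hnh]
          · rw [heq]; exact msgNumOk_mono hC hmono
      | choice_right h' =>
        cases h' with
        | guard hg =>
          obtain ⟨d, src, hmsg, heq⟩ := hg
          have hmono : ∀ j, (σ j).no ≤ (σ' j).no :=
            no_mono_all hE (le_of_eq (by rw [heq]))
          refine ⟨⟨by rw [heq]; exact hA, ?_, ?_⟩,
            Or.inr (Or.inr (Or.inr (Or.inr (Or.inr (Or.inr (Or.inr (Or.inl
              ⟨rfl, by rw [heq]; exact h2, by rw [heq]; exact hmsg⟩)))))))⟩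
          · have hnh : (σ' i).nhip = i := by rw [heq]; exact h2
            rw [hnh]
          · rw [heq]; exact msgNumOk_mono hC hmono
    -- ζ = toyT3 (assign 3: no := max no num)
    · subst h
      simp only [toyT3] at ht
      cases ht with
      | assign hσ =>
        have hσ' : σ' i = { σ i with no := max (σ i).no (σ i).num } := hσ
        have hmono : ∀ j, (σ j).no ≤ (σ' j).no :=
          no_mono_all hE (by rw [hσ']; exact le_max_left _ _)
        refine ⟨⟨by rw [hσ']; exact hA, ?_, ?_⟩,
          Or.inr (Or.inr (Or.inr (Or.inr (Or.inl rfl))))⟩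
        · have hnh : (σ' i).nhip = i := by rw [hσ']; exact h2
          rw [hnh]
        · rw [hσ']; exact msgNumOk_mono hC hmono
    -- ζ = toyT4 (bcast 4)
    · subst h
      simp only [toyT4] at ht
      cases ht with
      | bcast hσ =>
        have hmono : ∀ j, (σ j).no ≤ (σ' j).no :=
          no_mono_all hE (le_of_eq (by rw [hσ]))
        exact ⟨toyBase_keep ⟨hA, hB, hC⟩ hσ hmono,
          Or.inr (Or.inr (Or.inr (Or.inr (Or.inr (Or.inl rfl)))))⟩
    -- ζ = toyReset 5
    · subst h
      simp only [toyReset] at ht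
      cases ht with
      | assign hσ => exact toy_reset_step ⟨hA, hB, hC⟩ hE hσ
    -- ζ = call PToy
    · subst h
      cases ht with
      | call h' =>
        rw [toySpec_eq] at h'
        cases h' with
        | receive m hσ =>
          exact toy_recv_step ⟨hA, hB, hC⟩ (hI m rfl) hE hσ
    -- ζ = toyT6 (choice of guards 6)
    · subst h
      simp only [toyT6] at ht
      cases ht with
      | choice_left h' =>
        cases h' with
        | guard hg =>
          have hg' : σ' i ∈ (if (σ i).num ≥ (σ i).no then ({σ i} : Set ToyState) else ∅) := hg
          by_cases hc : (σ i).num ≥ (σ i).no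
          · rw [if_pos hc] at hg'
            have heq : σ' i = σ i := hg'
            have hmono : ∀ j, (σ j).no ≤ (σ' j).no :=
              no_mono_all hE (le_of_eq (by rw [heq]))
            refine ⟨toyBase_keep ⟨hA, hB, hC⟩ heq hmono,
              Or.inr (Or.inr (Or.inr (Or.inr (Or.inr (Or.inr (Or.inr (Or.inr (Or.inl
                ⟨rfl, by rw [heq]; exact h2, by rw [heq]; exact h3,
                  by rw [heq]; exact hc⟩))))))))⟩
          · rw [if_neg hc] at hg'
            exact absurd hg' (Set.notMem_empty _)
      | choice_right h' =>
        cases h' with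
        | guard hg =>
          have hg' : σ' i ∈ (if (σ i).num < (σ i).no then ({σ i} : Set ToyState) else ∅) := hg
          by_cases hc : (σ i).num < (σ i).no
          · rw [if_pos hc] at hg'
            have heq : σ' i = σ i := hg'
            have hmono : ∀ j, (σ j).no ≤ (σ' j).no :=
              no_mono_all hE (le_of_eq (by rw [heq]))
            refine ⟨toyBase_keep ⟨hA, hB, hC⟩ heq hmono,
              Or.inr (Or.inr (Or.inr (Or.inr (Or.inr (Or.inr (Or.inr (Or.inr (Or.inr
                (Or.inr (Or.inr (Or.inr rfl)))))))))))⟩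
          · rw [if_neg hc] at hg'
            exact absurd hg' (Set.notMem_empty _)
    -- ζ = toyT7 (assign 7: no := num)
    · subst h
      simp only [toyT7] at ht
      cases ht with
      | assign hσ =>
        have hσ' : σ' i = { σ i with no := (σ i).num } := hσ
        have hmono : ∀ j, (σ j).no ≤ (σ' j).no :=
          no_mono_all hE (by rw [hσ']; exact h4)
        have hnum : (σ i).num ≤ (σ ((σ i).sip)).no := by
          have := hC; rw [h3] at this; exact this
        refine ⟨⟨by rw [hσ']; exact hA, ?_, ?_⟩,
          Or.inr (Or.inr (Or.inr (Or.inr (Or.inr (Or.inr (Or.inr (Or.inr (Or.inr (Or.inl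
            ⟨rfl, ?_⟩)))))))))⟩
        · have hnh : (σ' i).nhip = i := by rw [hσ']; exact h2
          rw [hnh]
        · rw [hσ']; exact msgNumOk_mono hC hmono
        · rw [hσ']
          exact le_trans hnum (hmono _)
    -- ζ = toyT8 (assign 8: nhip := sip)
    · subst h
      simp only [toyT8] at ht
      cases ht with
      | assign hσ =>
        have hσ' : σ' i = { σ i with nhip := (σ i).sip } := hσ
        have hmono : ∀ j, (σ j).no ≤ (σ' j).no :=
          no_mono_all hE (le_of_eq (by rw [hσ']))
        refine ⟨⟨by rw [hσ']; exact hA, ?_, ?_⟩,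
          Or.inr (Or.inr (Or.inr (Or.inr (Or.inr (Or.inr (Or.inr (Or.inr (Or.inr (Or.inr
            (Or.inl rfl))))))))))⟩
        · rw [hσ']
          exact le_trans h2 (hmono _)
        · rw [hσ']; exact msgNumOk_mono hC hmono
    -- ζ = toyT9 (bcast 9)
    · subst h
      simp only [toyT9] at ht
      cases ht with
      | bcast hσ =>
        have hmono : ∀ j, (σ j).no ≤ (σ' j).no :=
          no_mono_all hE (le_of_eq (by rw [hσ]))
        exact ⟨toyBase_keep ⟨hA, hB, hC⟩ hσ hmono,
          Or.inr (Or.inr (Or.inr (Or.inr (Or.inr (Or.inr (Or.inr (Or.inr (Or.inr (Or.inr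
            (Or.inr (Or.inl rfl)))))))))))⟩
    -- ζ = toyReset 10
    · subst h
      simp only [toyReset] at ht
      cases ht with
      | assign hσ => exact toy_reset_step ⟨hA, hB, hC⟩ hE hσ
    -- ζ = toyReset 11
    · subst h
      simp only [toyReset] at ht
      cases ht with
      | assign hσ => exact toy_reset_step ⟨hA, hB, hC⟩ hE hσ

/-- the sequential open invariant of the toy protocol. -/
theorem toy_oseq_bigger_than_next (i : ℕ) :
    Oinvariant (optoy i)
      (otherwith nosIncrease {i} (orecvmsg msgNumOk))
      (other nosIncrease {i})
      (fun x => (x.1 i).no ≤ (x.1 ((x.1 i).nhip)).no) := by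
  intro s hr
  exact (toyInv_oreachable i s hr).1.2.1

end AWN
end

section
/- Network-level invariant for the toy protocol: for every net_tree n with disjoint node addresses (wf_net_tree n), the closed network closed (pnet (λi. ptoy i ⟨⟨ qmsg) n) satisfies the invariant netglobal (λσ. ∀ i, no (σ i) ≤ no (σ (nhip (σ i)))): in every reachable network state, the value of no at each node is never greater than the value of no at the node named by its nhip field. -/
/-!
The invariant is carried node by node, relative to the global state σ of all data states:
ξ.no ≤ (σ ξ.nhip).no, and every pkt(d, src) held in `msg` or waiting in the queue has
d ≤ (σ src).no. The control location adds what the process has established locally: from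
label 1 until nhip is overwritten at label 8 we have nhip = ip, so raising `no` at labels 3
and 7 is harmless, and after `is_pkt` the received number is bounded by (σ sip).no.

Since `no` only grows, all these facts are monotone in σ, so a step of one node cannot
invalidate those of another. The stepping node re-establishes its own facts because it owns
the entry σ ip, and what it broadcasts, pkt(no, ip), satisfies the message invariant.
Disjointness of the addresses makes σ agree with the data state of every node.
-/

namespace AWN

variable {S PN L IP MSG DATA : Type}

variable {S PN L IP MSG DATA : Type}

section Networks

variable {PS LS : Type}

def NetState.Forall (P : IP → PS → Prop) : NetState PS IP → Prop
  | .node i s _ => P i s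
  | .subnet s t => s.Forall P ∧ t.Forall P

theorem NetState.Forall.imp {P Q : IP → PS → Prop} (hPQ : ∀ i x, P i x → Q i x) :
    ∀ {s : NetState PS IP}, s.Forall P → s.Forall Q
  | .node _ _ _, h => hPQ _ _ h
  | .subnet _ _, h => ⟨NetState.Forall.imp hPQ h.1, NetState.Forall.imp hPQ h.2⟩

def WfNetState : NetState PS IP → Prop
  | .node _ _ _ => True
  | .subnet s t => netIps s ∩ netIps t = ∅ ∧ WfNetState s ∧ WfNetState t

def NetState.Forall₂ (r : IP → PS → PS → Prop) : NetState PS IP → NetState PS IP → Prop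
  | .node i x _, .node i' y _ => i' = i ∧ r i x y
  | .subnet s t, .subnet s' t' => s.Forall₂ r s' ∧ t.Forall₂ r t'
  | _, _ => False

theorem NetState.Forall₂.refl {r : IP → PS → PS → Prop} (hr : ∀ i x, r i x x) :
    ∀ s : NetState PS IP, s.Forall₂ r s
  | .node _ _ _ => ⟨rfl, hr _ _⟩
  | .subnet s t => ⟨NetState.Forall₂.refl hr s, NetState.Forall₂.refl hr t⟩

theorem NetState.Forall₂.netIps_eq {r : IP → PS → PS → Prop} :
    ∀ {s s' : NetState PS IP}, s.Forall₂ r s' → netIps s' = netIps s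
  | .node _ _ _, .node _ _ _, h => h.1 ▸ rfl
  | .subnet _ _, .subnet _ _, h => congrArg₂ (· ∪ ·) h.1.netIps_eq h.2.netIps_eq

theorem NetState.Forall₂.wfNetState {r : IP → PS → PS → Prop} :
    ∀ {s s' : NetState PS IP}, s.Forall₂ r s' → WfNetState s → WfNetState s'
  | .node _ _ _, .node _ _ _, _, _ => trivial
  | .subnet _ _, .subnet _ _, h, ⟨hst, hs, ht⟩ =>
    ⟨h.1.netIps_eq ▸ h.2.netIps_eq ▸ hst, h.1.wfNetState hs, h.2.wfNetState ht⟩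

theorem _root_.Option.Rel.orElse {α β : Type} {r : α → β → Prop} {o₁ o₂ : Option α}
    {o₁' o₂' : Option β} :
    Option.Rel r o₁ o₁' → Option.Rel r o₂ o₂' →
      Option.Rel r (o₁.orElse fun _ => o₂) (o₁'.orElse fun _ => o₂')
  | .some h, _ => .some h
  | .none, h => h

theorem _root_.Option.Rel.getD {α : Type} {r : α → α → Prop} {o o' : Option α} {x : α}
    (h : Option.Rel r o o') (hx : r x x) : r (o.getD x) (o'.getD x) := by
  cases h with
  | some h => exact h
  | none => exact hx

section Netlift

variable [DecidableEq IP] (sr : PS → S × LS)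

theorem netlift_eq_none_iff (j : IP) :
    ∀ s : NetState PS IP, netlift sr s j = none ↔ j ∉ netIps s
  | .node _ _ _ => by simp [netlift, netIps]
  | .subnet s t => by
    simp [netlift, netIps, netlift_eq_none_iff j s, netlift_eq_none_iff j t]

theorem NetState.Forall.exists_of_netlift_eq_some {P : IP → PS → Prop} {j : IP} {ξ : S} :
    ∀ {s : NetState PS IP}, s.Forall P → netlift sr s j = some ξ → ∃ x, P j x ∧ (sr x).1 = ξ
  | .node _ x _, h, hj => by
    simp only [netlift] at hj
    split_ifs at hj with hji
    subst hji
    exact ⟨x, h, Option.some.inj hj⟩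
  | .subnet s t, h, hj => by
    simp only [netlift] at hj
    cases hs : netlift sr s j with
    | none =>
      rw [hs, Option.orElse_none] at hj
      exact h.2.exists_of_netlift_eq_some hj
    | some ξ₀ =>
      rw [hs, Option.orElse_some] at hj
      exact Option.some.inj hj ▸ h.1.exists_of_netlift_eq_some hs

theorem WfNetState.forall_netlift_eq_some :
    ∀ {s : NetState PS IP}, WfNetState s → s.Forall (fun i x => netlift sr s i = some (sr x).1)
  | .node _ _ _, _ => if_pos rfl
  | .subnet s t, ⟨hst, hs, ht⟩ => by
    refine ⟨hs.forall_netlift_eq_some.imp fun i x h => by simp [netlift, h],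
      ht.forall_netlift_eq_some.imp fun i x h => ?_⟩
    have hit : i ∈ netIps t := by
      by_contra hi
      simp [(netlift_eq_none_iff sr i t).2 hi] at h
    have his : netlift sr s i = none :=
      (netlift_eq_none_iff sr i s).2 fun his => (hst ▸ ⟨his, hit⟩ : i ∈ (∅ : Set IP))
    simp [netlift, his, h]

theorem NetState.Forall₂.netlift_rel {P : IP → PS → Prop} {r : IP → PS → PS → Prop}
    {q : S → S → Prop} (hq : ∀ i x y, P i x → r i x y → q (sr x).1 (sr y).1) (j : IP) :
    ∀ {s s' : NetState PS IP}, s.Forall P → s.Forall₂ r s' →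
      Option.Rel q (netlift sr s j) (netlift sr s' j)
  | .node i x _, .node _ y _, hx, ⟨rfl, hxy⟩ => by
    simp only [netlift]
    split_ifs
    exacts [.some (hq i x y hx hxy), .none]
  | .subnet _ _, .subnet _ _, ⟨hs, ht⟩, ⟨h₁, h₂⟩ =>
    (h₁.netlift_rel hq j hs).orElse (h₂.netlift_rel hq j ht)

def globalState (d : IP → S) (s : NetState PS IP) : IP → S :=
  fun j => (netlift sr s j).getD (d j)

end Netlift

section Pnet

variable {np : IP → Automaton PS (SeqAction IP MSG DATA)}

theorem pnet_init :
    ∀ {t : NetTree IP} {s : NetState PS IP}, s ∈ (pnet np t).init →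
      netIps s = netTreeIps t ∧ s.Forall (fun i x => x ∈ (np i).init)
  | .node _ _, _, ⟨_, hx, rfl⟩ => ⟨rfl, hx⟩
  | .par _ _, _, ⟨_, _, hs, ht, rfl⟩ =>
    ⟨congrArg₂ (· ∪ ·) (pnet_init hs).1 (pnet_init ht).1, (pnet_init hs).2, (pnet_init ht).2⟩

theorem WfNetTree.wfNetState_of_init :
    ∀ {t : NetTree IP} {s : NetState PS IP}, WfNetTree t → s ∈ (pnet np t).init → WfNetState s
  | .node _ _, _, _, ⟨_, _, rfl⟩ => trivial
  | .par _ _, _, ⟨hwf, hwf₁, hwf₂⟩, ⟨_, _, hs, ht, rfl⟩ =>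
    ⟨(pnet_init hs).1 ▸ (pnet_init ht).1 ▸ hwf, hwf₁.wfNetState_of_init hs,
      hwf₂.wfNetState_of_init ht⟩

theorem pnet_trans_forall₂ :
    ∀ {t : NetTree IP} {s s' : NetState PS IP} {a : NodeAction IP MSG DATA},
      (pnet np t).trans s a s' →
        s.Forall₂ (fun i => Relation.ReflGen fun x y => ∃ b, (np i).trans x b y) s'
  | .node _ _, _, _, _, h => by
    cases h <;> first | exact ⟨rfl, .refl⟩ | exact ⟨rfl, .single ⟨_, ‹_›⟩⟩
  | .par _ _, _, _, _, h => by
    cases h <;> first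
      | exact ⟨pnet_trans_forall₂ ‹_›, pnet_trans_forall₂ ‹_›⟩
      | exact ⟨pnet_trans_forall₂ ‹_›, .refl (fun _ _ => .refl) _⟩
      | exact ⟨.refl (fun _ _ => .refl) _, pnet_trans_forall₂ ‹_›⟩

end Pnet

end Networks

section Invariants

variable {PS LS β : Type}

def SeqAction.Guarantee (M : MSG → Prop) (P : Prop) : SeqAction IP MSG DATA → Prop
  | .broadcast m | .groupcast _ m | .unicast _ m => P ∧ M m
  | .receive m => M m → P
  | _ => P

def NodeAction.Guarantee (M : MSG → Prop) (P : Prop) : NodeAction IP MSG DATA → Prop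
  | .cast _ m => P ∧ M m
  | .arrive _ _ m => M m → P
  | _ => P

theorem SeqAction.Guarantee.mono {M : MSG → Prop} {P Q : Prop} (hPQ : P → Q) :
    ∀ {a : SeqAction IP MSG DATA}, a.Guarantee M P → a.Guarantee M Q
  | .broadcast _, h | .groupcast _ _, h | .unicast _ _, h => ⟨hPQ h.1, h.2⟩
  | .receive _, h => fun hm => hPQ (h hm)
  | .notunicast _, h | .send _, h | .deliver _, h | .tau, h => hPQ h

/-- Rely-guarantee conditions for a per-node invariant `Inv σ i x` relative to the global
state `σ`: the environment may only increase `f` at each address, the stepping node owns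
its own entry of `σ`, and every message it sends satisfies `M`, which it may in turn assume
of every message it receives. -/
structure NodeInvariant [Preorder β] (np : IP → Automaton PS (SeqAction IP MSG DATA))
    (sr : PS → S × LS) (f : S → β) (Inv : (IP → S) → IP → PS → Prop)
    (M : (IP → S) → MSG → Prop) : Prop where
  mono {σ σ' : IP → S} {i : IP} {x : PS} : f ∘ σ ≤ f ∘ σ' → Inv σ i x → Inv σ' i x
  msg_mono {σ σ' : IP → S} {m : MSG} : f ∘ σ ≤ f ∘ σ' → M σ m → M σ' m
  init {σ : IP → S} {i : IP} {x : PS} : x ∈ (np i).init → Inv σ i x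
  grows {σ : IP → S} {i : IP} {x y : PS} {a : SeqAction IP MSG DATA} :
    Inv σ i x → (np i).trans x a y → f (sr x).1 ≤ f (sr y).1
  step {σ σ' : IP → S} {i : IP} {x y : PS} {a : SeqAction IP MSG DATA} :
    Inv σ i x → (np i).trans x a y → f ∘ σ ≤ f ∘ σ' → σ' i = (sr y).1 →
      a.Guarantee (M σ') (Inv σ' i y)

def parSr (sr : PS → S × LS) : PS × List MSG → S × (LS × List MSG) :=
  fun x => ((sr x.1).1, ((sr x.1).2, x.2))

variable [Preorder β] {np : IP → Automaton PS (SeqAction IP MSG DATA)} {sr : PS → S × LS}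
  {f : S → β} {Inv : (IP → S) → IP → PS → Prop} {M : (IP → S) → MSG → Prop}

theorem NodeInvariant.par_qmsg (h : NodeInvariant np sr f Inv M) :
    NodeInvariant (fun i => par (np i) qmsg) (parSr sr) f
      (fun σ i x => Inv σ i x.1 ∧ ∀ m ∈ x.2, M σ m) M where
  mono hσ hx := ⟨h.mono hσ hx.1, fun m hm => h.msg_mono hσ (hx.2 m hm)⟩
  msg_mono := h.msg_mono
  init hx := ⟨h.init hx.1, by simp [show _ = [] from hx.2]⟩
  grows hx hstep := by
    cases hstep with
    | left hA _ | comm hA _ => exact h.grows hx.1 hA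
    | right _ _ => exact le_rfl
  step {σ σ' _ x _ _} hx hstep hσ hag := by
    obtain ⟨hinv, hq⟩ := hx
    have hq' : ∀ m ∈ x.2, M σ' m := fun m hm => h.msg_mono hσ (hq m hm)
    cases hstep with
    | left hA _ => exact (h.step hinv hA hσ hag).mono fun hy => ⟨hy, hq'⟩
    | right hQ hns =>
      cases hQ with
      | receive q m =>
        intro hm
        exact ⟨h.mono hσ hinv, by simpa [or_imp, forall_and, hm] using hq'⟩
      | send => exact absurd trivial hns
    | comm hA hQ =>
      cases hQ with
      | send m q =>
        exact ⟨h.step hinv hA hσ hag (hq' _ (.head _)), fun m' hm' => hq' m' (.tail _ hm')⟩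

theorem NodeInvariant.pnet_step (h : NodeInvariant np sr f Inv M) {σ σ' : IP → S}
    (hσ : f ∘ σ ≤ f ∘ σ') :
    ∀ {t : NetTree IP} {s s' : NetState PS IP} {a : NodeAction IP MSG DATA},
      (pnet np t).trans s a s' → s.Forall (Inv σ) →
        s'.Forall (fun i x => σ' i = (sr x).1) → a.Guarantee (M σ') (s'.Forall (Inv σ'))
  | .node _ _, _, _, _, hstep, hx, hag => by
    cases hstep <;> first
      | exact h.step hx ‹_› hσ hag
      | exact fun _ => h.mono hσ hx
      | exact h.mono hσ hx
  | .par _ _, .node _ _ _, _, _, hstep, _, _ => by cases hstep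
  | .par _ _, .subnet _ _, _, _, hstep, ⟨hs, ht⟩, hag => by
    cases hstep with
    | cast_left h₁ h₂ =>
      have ⟨hs', hm⟩ := h.pnet_step hσ h₁ hs hag.1
      exact ⟨⟨hs', h.pnet_step hσ h₂ ht hag.2 hm⟩, hm⟩
    | cast_right h₁ h₂ =>
      have ⟨ht', hm⟩ := h.pnet_step hσ h₂ ht hag.2
      exact ⟨⟨h.pnet_step hσ h₁ hs hag.1 hm, ht'⟩, hm⟩
    | arrive h₁ h₂ => exact fun hm => ⟨h.pnet_step hσ h₁ hs hag.1 hm, h.pnet_step hσ h₂ ht hag.2 hm⟩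
    | tau_left h₁ | deliver_left h₁ =>
      exact ⟨h.pnet_step hσ h₁ hs hag.1, ht.imp fun _ _ => h.mono hσ⟩
    | tau_right h₂ | deliver_right h₂ =>
      exact ⟨hs.imp fun _ _ => h.mono hσ, h.pnet_step hσ h₂ ht hag.2⟩
    | connect h₁ h₂ | disconnect h₁ h₂ =>
      exact ⟨h.pnet_step hσ h₁ hs hag.1, h.pnet_step hσ h₂ ht hag.2⟩

theorem exists_of_closed_trans {NS : Type} {A : Automaton NS (NodeAction IP MSG DATA)}
    {s s' : NS} {a : NodeAction IP MSG DATA} (h : (closed A).trans s a s') :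
    ∃ b, A.trans s b s' ∧ ∀ (M : MSG → Prop) (P : Prop), b.Guarantee M P → P := by
  cases h with
  | cast h => exact ⟨_, h, fun _ _ hP => hP.1⟩
  | tau h | deliver h | connect h | disconnect h => exact ⟨_, h, fun _ _ hP => hP⟩

theorem NodeInvariant.forall_of_reachable [DecidableEq IP] (h : NodeInvariant np sr f Inv M)
    {t : NetTree IP} (ht : WfNetTree t) (d : IP → S) {I : NodeAction IP MSG DATA → Prop}
    {s : NetState PS IP} (hs : Reachable (closed (pnet np t)) I s) :
    s.Forall (Inv (globalState sr d s)) := by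
  suffices WfNetState s ∧ s.Forall (Inv (globalState sr d s)) from this.2
  induction hs with
  | init hinit => exact ⟨ht.wfNetState_of_init hinit, (pnet_init hinit).2.imp fun _ _ => h.init⟩
  | @step s₁ s₂ _ _ hstep _ ih =>
    obtain ⟨hwf, hinv⟩ := ih
    obtain ⟨b, hb, hG⟩ := exists_of_closed_trans hstep
    have hlocal := pnet_trans_forall₂ hb
    have hwf' := hlocal.wfNetState hwf
    have hσ : f ∘ globalState sr d s₁ ≤ f ∘ globalState sr d s₂ := fun j =>
      (hlocal.netlift_rel sr (q := fun ξ ξ' => f ξ ≤ f ξ') (fun _ _ _ hx => by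
        rintro (_ | ⟨_, hstep⟩)
        exacts [le_rfl, h.grows hx hstep]) j hinv).getD le_rfl
    have hag : s₂.Forall (fun i x => globalState sr d s₂ i = (sr x).1) :=
      (hwf'.forall_netlift_eq_some sr).imp fun _ _ hx => by simp [globalState, hx]
    exact ⟨hwf', hG _ _ (h.pnet_step hσ hb hinv hag)⟩

end Invariants

-- `toyₗ` is the control term of `toySpec .PToy` at label `l`.
def toy5 : ToySeqp := toyReset 5
def toy4 : ToySeqp := .bcast 4 (fun ξ => .pkt ξ.no ξ.ip) toy5
def toy3 : ToySeqp := .assign 3 (fun ξ => { ξ with no := max ξ.no ξ.num }) toy4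
def toy10 : ToySeqp := toyReset 10
def toy9 : ToySeqp := .bcast 9 (fun ξ => .pkt ξ.no ξ.ip) toy10
def toy8 : ToySeqp := .assign 8 (fun ξ => { ξ with nhip := ξ.sip }) toy9
def toy7 : ToySeqp := .assign 7 (fun ξ => { ξ with no := ξ.num }) toy8
def toy11 : ToySeqp := toyReset 11
def toy6 : ToySeqp :=
  .choice (.guard 6 (fun ξ => if ξ.num ≥ ξ.no then {ξ} else ∅) toy7)
    (.guard 6 (fun ξ => if ξ.num < ξ.no then {ξ} else ∅) toy11)
def toy2 : ToySeqp := .choice (.guard 2 isNewpkt toy3) (.guard 2 isPkt toy6)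
def toy1 : ToySeqp := .assign 1 (fun ξ => { ξ with nhip := ξ.ip }) toy2

inductive ToyCtrl (σ : ℕ → ToyState) : ToyState → ToySeqp → Prop where
  | at0 {ξ : ToyState} : ToyCtrl σ ξ (toySpec .PToy)
  | at1 {ξ : ToyState} : msgNumOk σ ξ.msg → ToyCtrl σ ξ toy1
  | at2 {ξ : ToyState} : msgNumOk σ ξ.msg → ξ.nhip = ξ.ip → ToyCtrl σ ξ toy2
  | at3 {ξ : ToyState} : ξ.nhip = ξ.ip → ToyCtrl σ ξ toy3
  | at4 {ξ : ToyState} : ToyCtrl σ ξ toy4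
  | at5 {ξ : ToyState} : ToyCtrl σ ξ toy5
  | at6 {ξ : ToyState} : ξ.nhip = ξ.ip → ξ.num ≤ (σ ξ.sip).no → ToyCtrl σ ξ toy6
  | at7 {ξ : ToyState} : ξ.nhip = ξ.ip → ξ.num ≤ (σ ξ.sip).no → ξ.no ≤ ξ.num →
      ToyCtrl σ ξ toy7
  | at8 {ξ : ToyState} : ξ.nhip = ξ.ip → ξ.no ≤ (σ ξ.sip).no → ToyCtrl σ ξ toy8
  | at9 {ξ : ToyState} : ToyCtrl σ ξ toy9
  | at10 {ξ : ToyState} : ToyCtrl σ ξ toy10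
  | at11 {ξ : ToyState} : ToyCtrl σ ξ toy11
  | call {ξ : ToyState} : ToyCtrl σ ξ (.call .PToy)

def ToyInv (σ : ℕ → ToyState) (i : ℕ) (x : ToyState × ToySeqp) : Prop :=
  x.1.ip = i ∧ x.1.no ≤ (σ x.1.nhip).no ∧ ToyCtrl σ x.1 x.2

theorem msgNumOk.mono {σ σ' : ℕ → ToyState} {m : ToyMsg}
    (hσ : ToyState.no ∘ σ ≤ ToyState.no ∘ σ') (hm : msgNumOk σ m) : msgNumOk σ' m := by
  cases m with
  | newpkt => trivial
  | pkt _ src => exact hm.trans (hσ src)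

theorem ToyCtrl.mono {σ σ' : ℕ → ToyState} {ξ : ToyState} {p : ToySeqp}
    (hσ : ToyState.no ∘ σ ≤ ToyState.no ∘ σ') (h : ToyCtrl σ ξ p) : ToyCtrl σ' ξ p := by
  cases h <;> constructor <;>
    first | assumption | exact msgNumOk.mono hσ ‹_› | exact (‹_› : _ ≤ _).trans (hσ _)

theorem ToyInv.mono {σ σ' : ℕ → ToyState} {i : ℕ} {x : ToyState × ToySeqp}
    (hσ : ToyState.no ∘ σ ≤ ToyState.no ∘ σ') (h : ToyInv σ i x) : ToyInv σ' i x :=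
  ⟨h.1, h.2.1.trans (hσ _), h.2.2.mono hσ⟩

theorem ToyInv.step {σ : ℕ → ToyState} {i : ℕ} {ξ ξ' : ToyState} {p p' : ToySeqp}
    {a : SeqAction ℕ ToyMsg ℕ} (hinv : ToyInv σ i (ξ, p)) (h : SeqpSos toySpec (ξ, p) a (ξ', p')) :
    ξ.no ≤ ξ'.no ∧ ∀ σ' : ℕ → ToyState, ToyState.no ∘ σ ≤ ToyState.no ∘ σ' → σ' i = ξ' →
      a.Guarantee (msgNumOk σ') (ToyInv σ' i (ξ', p')) := by
  obtain ⟨hip, hno, hc⟩ : ξ.ip = i ∧ ξ.no ≤ (σ ξ.nhip).no ∧ ToyCtrl σ ξ p := hinv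
  have hown : ∀ σ' : ℕ → ToyState, σ' i = ξ' → ξ'.nhip = i → ξ'.no ≤ (σ' ξ'.nhip).no :=
    fun σ' hag hnhip => by rw [hnhip, hag]
  cases hc with
  | at0 =>
    cases h with
    | receive m => exact ⟨le_rfl, fun σ' hσ _ hm => ⟨hip, hno.trans (hσ _), .at1 hm⟩⟩
  | call =>
    cases h with
    | call h =>
      cases h with
      | receive m => exact ⟨le_rfl, fun σ' hσ _ hm => ⟨hip, hno.trans (hσ _), .at1 hm⟩⟩
  | at1 hmsg =>
    cases h with
    | assign => exact ⟨le_rfl, fun σ' hσ hag => ⟨hip, hown σ' hag hip, .at2 (hmsg.mono hσ) rfl⟩⟩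
  | at2 hmsg hnhip =>
    cases h with
    | choice_left h =>
      cases h with
      | guard hg =>
        obtain ⟨_, _, _, rfl⟩ := hg
        exact ⟨le_rfl, fun σ' hσ _ => ⟨hip, hno.trans (hσ _), .at3 hnhip⟩⟩
    | choice_right h =>
      cases h with
      | guard hg =>
        obtain ⟨_, _, hm, rfl⟩ := hg
        rw [hm] at hmsg
        exact ⟨le_rfl, fun σ' hσ _ => ⟨hip, hno.trans (hσ _), .at6 hnhip (hmsg.trans (hσ _))⟩⟩
  | at3 hnhip =>
    cases h with
    | assign => exact ⟨le_max_left _ _, fun σ' _ hag => ⟨hip, hown σ' hag (hnhip.trans hip), .at4⟩⟩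
  | at4 | at9 =>
    cases h with
    | bcast =>
      refine ⟨le_rfl, fun σ' hσ hag => ⟨⟨hip, hno.trans (hσ _), ?_⟩, ?_⟩⟩
      · constructor
      · show _ ≤ _
        rw [hip, hag]
  | at5 | at10 | at11 =>
    cases h with
    | assign => exact ⟨le_rfl, fun σ' hσ _ => ⟨hip, hno.trans (hσ _), .call⟩⟩
  | at6 hnhip hnum =>
    cases h with
    | choice_left h =>
      cases h with
      | guard hg =>
        obtain ⟨hge, rfl⟩ := (Set.mem_ite_empty_right _ _ _).1 hg
        exact ⟨le_rfl, fun σ' hσ _ => ⟨hip, hno.trans (hσ _), .at7 hnhip (hnum.trans (hσ _)) hge⟩⟩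
    | choice_right h =>
      cases h with
      | guard hg =>
        obtain ⟨_, rfl⟩ := (Set.mem_ite_empty_right _ _ _).1 hg
        exact ⟨le_rfl, fun σ' hσ _ => ⟨hip, hno.trans (hσ _), .at11⟩⟩
  | at7 hnhip hnum hle =>
    cases h with
    | assign => exact ⟨hle, fun σ' hσ hag =>
        ⟨hip, hown σ' hag (hnhip.trans hip), .at8 hnhip (hnum.trans (hσ _))⟩⟩
  | at8 _ hsip =>
    cases h with
    | assign => exact ⟨le_rfl, fun σ' hσ _ => ⟨hip, hsip.trans (hσ _), .at9⟩⟩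

theorem nodeInvariant_ptoy : NodeInvariant ptoy id ToyState.no ToyInv msgNumOk where
  mono := ToyInv.mono
  msg_mono := msgNumOk.mono
  init hx := by
    obtain rfl := hx
    exact ⟨rfl, Nat.zero_le _, .at0⟩
  grows hx h := (ToyInv.step hx h).1
  step hx h hσ hag := (ToyInv.step hx h).2 _ hσ hag

/-- the network-level invariant of the toy protocol. -/
theorem toy_bigger_than_next (n : NetTree ℕ) (hwf : WfNetTree n) :
    Invariant (closed (pnet (fun i => par (ptoy i) qmsg) n)) (fun _ => True)
      (toyNetglobal (fun σ => ∀ i, (σ i).no ≤ (σ ((σ i).nhip)).no)) := by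
  intro s hs i
  set σ := globalState srToy toyInit s
  have hinv : s.Forall fun j x => ToyInv σ j x.1 ∧ ∀ m ∈ x.2, msgNumOk σ m :=
    nodeInvariant_ptoy.par_qmsg.forall_of_reachable hwf toyInit hs
  change (σ i).no ≤ (σ (σ i).nhip).no
  cases h : netlift srToy s i with
  | none =>
    have hi : σ i = toyInit i := by simp [σ, globalState, h]
    rw [hi]
    exact Nat.zero_le _
  | some ξ =>
    obtain ⟨x, hx, rfl⟩ := hinv.exists_of_netlift_eq_some srToy h
    have hi : σ i = x.1.1 := by simp [σ, globalState, h, srToy]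
    rw [hi]
    exact hx.1.2.1

end AWN
end
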